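/- If φ''_{2F} ≤ 0, then the infimum of ⟨L^a u, u⟩ over admissible displacements u with ‖u'‖_{ℓ²_ε} = 1 equals A_F − ε² ν_ε φ''_{2F}, where ν_ε = min over nonzero admissible u of ‖u''‖²_{ℓ²_ε}/‖u'‖²_{ℓ²_ε}, and 0 < ν_ε ≤ C for a universal constant C independent of N. -/

import Mathlib

/-!
Two summations by parts give, for admissible `u`, the identity
`⟨L^a u, u⟩ = A_F ‖u'‖² - ε² φ''_{2F} ‖u''‖²`. On the sphere `‖u'‖ = 1` the form is therefore
`A_F - ε² φ''_{2F} ‖u''‖² / ‖u'‖²`, and since `φ''_{2F} ≤ 0` it is smallest exactly where the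
Rayleigh quotient is; the minimizer of `ν_ε`, rescaled to the sphere, attains the bound.
`ν_ε > 0` because an admissible `u` whose second differences vanish has `‖u'‖² = ⟨-u'', u⟩ = 0`.
For `ν_ε ≤ 192` test with the bump `(N² - j²)²`: its second differences are at most `8N²` in size,
while Cauchy–Schwarz on the half chain `[-N, 0]` gives `N ∑ (u j - u (j - 1))² ≥ u(0)² = N⁸`.
-/

open Finset

namespace Finset

variable {M : Type*} [AddCommGroup M]

theorem sum_Icc_sub_sub_one (f : ℤ → M) {a b : ℤ} (hab : a - 1 ≤ b) :
    ∑ j ∈ Icc a b, (f j - f (j - 1)) = f b - f (a - 1) := by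
  induction b, hab using Int.leInduction with
  | base => simp
  | succ b _ ih =>
    have hI : Icc a (b + 1) = insert (b + 1) (Icc a b) := by
      ext; simp only [mem_Icc, mem_insert]; omega
    rw [hI, sum_insert (by simp), ih, add_sub_cancel_right]
    abel

theorem sum_Icc_comp_sub_one (f : ℤ → M) {a b : ℤ} (hab : a - 1 ≤ b) (ha : f (a - 1) = 0)
    (hb : f b = 0) : ∑ j ∈ Icc a b, f (j - 1) = ∑ j ∈ Icc a b, f j := by
  rw [← sub_eq_zero, ← neg_sub, ← sum_sub_distrib, sum_Icc_sub_sub_one f hab, ha, hb, sub_zero,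
    neg_zero]

theorem sq_sub_le_mul_sum_sq_sub (f : ℤ → ℝ) {a b : ℤ} (hab : a - 1 ≤ b) :
    (f b - f (a - 1)) ^ 2 ≤ (b - a + 1) * ∑ j ∈ Icc a b, (f j - f (j - 1)) ^ 2 := by
  have hcard : (#(Icc a b) : ℝ) = b - a + 1 := by
    rw [Int.card_Icc, ← Int.cast_natCast, Int.toNat_of_nonneg (by omega)]; push_cast; ring
  rw [← sum_Icc_sub_sub_one f hab, ← hcard]
  exact sq_sum_le_card_mul_sum_sq

end Finset

namespace AtomisticChain

def Admissible (n : ℤ) (u : ℤ → ℝ) : Prop :=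
  ∀ j : ℤ, n ≤ |j| → u j = 0

theorem Admissible.apply_eq_zero {n : ℤ} {u : ℤ → ℝ} (hu : Admissible n u) {j : ℤ}
    (hj : j ≤ -n ∨ n ≤ j) : u j = 0 :=
  hu j (le_abs.2 (by omega))

theorem Admissible.smul {n : ℤ} {u : ℤ → ℝ} (hu : Admissible n u) (t : ℝ) :
    Admissible n (t • u) := fun j hj => by
  rw [Pi.smul_apply, hu j hj, smul_zero]

noncomputable def secondDiff (u : ℤ → ℝ) (j : ℤ) : ℝ := u (j + 1) - 2 * u j + u (j - 1)

noncomputable def sumSqDiff (n : ℤ) (u : ℤ → ℝ) : ℝ :=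
  ∑ ℓ ∈ Icc (-n + 1) n, (u ℓ - u (ℓ - 1)) ^ 2

noncomputable def sumSqSecondDiff (n : ℤ) (u : ℤ → ℝ) : ℝ :=
  ∑ ℓ ∈ Icc (-n) n, secondDiff u ℓ ^ 2

section SummationByParts

variable {n : ℤ} {u : ℤ → ℝ}

theorem Admissible.sum_Icc_eq_sumSqDiff (hu : Admissible n u) :
    ∑ ℓ ∈ Icc (-n) n, (u ℓ - u (ℓ - 1)) ^ 2 = sumSqDiff n u := by
  refine (sum_subset (Icc_subset_Icc (by omega) le_rfl) fun j hj hj' => ?_).symm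
  simp only [mem_Icc] at hj hj'
  rw [hu.apply_eq_zero (j := j) (by omega), hu.apply_eq_zero (j := j - 1) (by omega), sub_zero,
    zero_pow two_ne_zero]

theorem Admissible.sum_neg_secondDiff_mul_self (hu : Admissible n u) (hn : 0 ≤ n) :
    ∑ j ∈ Icc (-n) n, -secondDiff u j * u j = sumSqDiff n u := by
  have hshift : ∑ j ∈ Icc (-n) n, (u j - u (j - 1)) * u (j - 1)
      = ∑ j ∈ Icc (-n) n, (u (j + 1) - u j) * u j := by
    simpa only [sub_add_cancel] using sum_Icc_comp_sub_one (fun j => (u (j + 1) - u j) * u j)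
      (by omega) (by rw [hu.apply_eq_zero (j := -n - 1) (by omega), mul_zero])
      (by rw [hu.apply_eq_zero (j := n) (by omega), mul_zero])
  calc ∑ j ∈ Icc (-n) n, -secondDiff u j * u j
      = ∑ j ∈ Icc (-n) n, ((u j - u (j - 1)) * u j - (u (j + 1) - u j) * u j) := by
        refine sum_congr rfl fun j _ => ?_; rw [secondDiff]; ring
    _ = ∑ j ∈ Icc (-n) n, ((u j - u (j - 1)) * u j - (u j - u (j - 1)) * u (j - 1)) := by
        rw [sum_sub_distrib, sum_sub_distrib, hshift]
    _ = sumSqDiff n u := by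
        rw [← hu.sum_Icc_eq_sumSqDiff]; exact sum_congr rfl fun j _ => by ring

/-- `u(j+2) - 2u(j) + u(j-2) = δ(j+1) + 2δ(j) + δ(j-1)` for `δ = secondDiff u`; shifting the outer
two terms onto `u` leaves `δ(j) (u(j-1) + 2u(j) + u(j+1)) = δ(j)² + 4 δ(j) u(j)`. -/
theorem Admissible.sum_neg_secondDiff_step_two_mul_self (hu : Admissible n u) (hn : 0 ≤ n) :
    ∑ j ∈ Icc (-n) n, -(u (j + 2) - 2 * u j + u (j - 2)) * u j
      = 4 * sumSqDiff n u - sumSqSecondDiff n u := by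
  have hδ : ∀ j, j ≤ -n - 1 ∨ n + 1 ≤ j → secondDiff u j = 0 := fun j hj => by
    rw [secondDiff, hu.apply_eq_zero (j := j + 1) (by omega),
      hu.apply_eq_zero (j := j) (by omega), hu.apply_eq_zero (j := j - 1) (by omega)]
    ring
  have hshift₁ : ∑ j ∈ Icc (-n) n, secondDiff u j * u (j - 1)
      = ∑ j ∈ Icc (-n) n, secondDiff u (j + 1) * u j := by
    simpa only [sub_add_cancel] using sum_Icc_comp_sub_one (fun j => secondDiff u (j + 1) * u j)
      (by omega) (by rw [hu.apply_eq_zero (j := -n - 1) (by omega), mul_zero])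
      (by rw [hu.apply_eq_zero (j := n) (by omega), mul_zero])
  have hshift₂ : ∑ j ∈ Icc (-n) n, secondDiff u (j - 1) * u j
      = ∑ j ∈ Icc (-n) n, secondDiff u j * u (j + 1) := by
    simpa only [sub_add_cancel] using sum_Icc_comp_sub_one (fun j => secondDiff u j * u (j + 1))
      (by omega) (by rw [hδ (-n - 1) (by omega), zero_mul])
      (by rw [hu.apply_eq_zero (j := n + 1) (by omega), mul_zero])
  calc ∑ j ∈ Icc (-n) n, -(u (j + 2) - 2 * u j + u (j - 2)) * u j
      = -(∑ j ∈ Icc (-n) n, secondDiff u (j + 1) * u j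
          + 2 * ∑ j ∈ Icc (-n) n, secondDiff u j * u j
          + ∑ j ∈ Icc (-n) n, secondDiff u (j - 1) * u j) := by
        rw [mul_sum, ← sum_add_distrib, ← sum_add_distrib, ← sum_neg_distrib]
        refine sum_congr rfl fun j _ => ?_
        simp only [secondDiff, show j + 1 + 1 = j + 2 by ring, show j - 1 - 1 = j - 2 by ring,
          add_sub_cancel_right, sub_add_cancel]
        ring
    _ = -(∑ j ∈ Icc (-n) n, secondDiff u j * (u (j - 1) + 2 * u j + u (j + 1))) := by
        rw [← hshift₁, hshift₂, mul_sum, ← sum_add_distrib, ← sum_add_distrib]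
        exact congrArg _ (sum_congr rfl fun j _ => by ring)
    _ = -(∑ j ∈ Icc (-n) n, (secondDiff u j ^ 2 + 4 * (secondDiff u j * u j))) := by
        refine congrArg _ (sum_congr rfl fun j _ => ?_)
        rw [secondDiff]; ring
    _ = 4 * sumSqDiff n u - sumSqSecondDiff n u := by
        rw [sum_add_distrib, ← mul_sum, ← hu.sum_neg_secondDiff_mul_self hn, sumSqSecondDiff]
        simp only [neg_mul, sum_neg_distrib]; ring

end SummationByParts

theorem Admissible.eq_zero_of_sumSqDiff_eq_zero {n : ℤ} {u : ℤ → ℝ} (hu : Admissible n u)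
    (h : sumSqDiff n u = 0) : u = 0 := by
  have hΔ : ∀ ℓ ∈ Icc (-n + 1) n, u ℓ - u (ℓ - 1) = 0 := fun ℓ hℓ =>
    pow_eq_zero_iff two_ne_zero |>.1 <|
      (sum_eq_zero_iff_of_nonneg fun _ _ => sq_nonneg _).1 h ℓ hℓ
  funext j
  by_cases hj : -n + 1 ≤ j ∧ j ≤ n
  · have htel := sum_Icc_sub_sub_one u (a := -n + 1) (b := j) (by omega)
    rw [sum_eq_zero fun ℓ hℓ => hΔ ℓ (Icc_subset_Icc le_rfl hj.2 hℓ),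
      hu.apply_eq_zero (j := -n + 1 - 1) (by omega), sub_zero] at htel
    exact htel.symm
  · exact hu.apply_eq_zero (by omega)

theorem Admissible.sumSqDiff_pos {n : ℤ} {u : ℤ → ℝ} (hu : Admissible n u) (hne : u ≠ 0) :
    0 < sumSqDiff n u :=
  (sum_nonneg fun _ _ => sq_nonneg _).lt_of_ne' (mt hu.eq_zero_of_sumSqDiff_eq_zero hne)

theorem Admissible.sumSqSecondDiff_pos {n : ℤ} {u : ℤ → ℝ} (hu : Admissible n u) (hn : 0 ≤ n)
    (hne : u ≠ 0) : 0 < sumSqSecondDiff n u := by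
  refine (sum_nonneg fun _ _ => sq_nonneg _).lt_of_ne' fun h => (hu.sumSqDiff_pos hne).ne' ?_
  have hδ : ∀ j ∈ Icc (-n) n, secondDiff u j = 0 := fun j hj =>
    pow_eq_zero_iff two_ne_zero |>.1 <|
      (sum_eq_zero_iff_of_nonneg fun _ _ => sq_nonneg _).1 h j hj
  rw [← hu.sum_neg_secondDiff_mul_self hn]
  exact sum_eq_zero fun j hj => by rw [hδ j hj, neg_zero, zero_mul]

/-- `normSqDiff ε n u = ‖u'‖²_{ℓ²_ε}`, `normSqSecondDiff ε n u = ‖u''‖²_{ℓ²_ε}` and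
`energy ε φF φ2F n u = ⟨L^a u, u⟩` with `φF = φ''_F`, `φ2F = φ''_{2F}`. -/
noncomputable def normSqDiff (ε : ℝ) (n : ℤ) (u : ℤ → ℝ) : ℝ :=
  ε * ∑ ℓ ∈ Icc (-n + 1) n, ((u ℓ - u (ℓ - 1)) / ε) ^ 2

noncomputable def normSqSecondDiff (ε : ℝ) (n : ℤ) (u : ℤ → ℝ) : ℝ :=
  ε * ∑ ℓ ∈ Icc (-n) n, ((u (ℓ + 1) - 2 * u ℓ + u (ℓ - 1)) / ε ^ 2) ^ 2

noncomputable def energy (ε φF φ2F : ℝ) (n : ℤ) (u : ℤ → ℝ) : ℝ :=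
  ε * ∑ j ∈ Icc (-n + 1) (n - 1),
    (φF * ((-u (j + 1) + 2 * u j - u (j - 1)) / ε ^ 2)
      + φ2F * ((-u (j + 2) + 2 * u j - u (j - 2)) / ε ^ 2)) * u j

section Scaling

variable {ε : ℝ} {n : ℤ} {u : ℤ → ℝ}

theorem normSqDiff_eq (hε : ε ≠ 0) : normSqDiff ε n u = sumSqDiff n u / ε := by
  rw [normSqDiff, sumSqDiff, sum_congr rfl fun _ _ => div_pow _ _ 2, ← sum_div]
  field_simp

theorem normSqSecondDiff_eq (hε : ε ≠ 0) :
    normSqSecondDiff ε n u = sumSqSecondDiff n u / ε ^ 3 := by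
  rw [normSqSecondDiff, sumSqSecondDiff, sum_congr rfl fun _ _ => div_pow _ _ 2, ← sum_div]
  field_simp
  rfl

theorem normSqDiff_smul (t : ℝ) : normSqDiff ε n (t • u) = t ^ 2 * normSqDiff ε n u := by
  simp only [normSqDiff, Pi.smul_apply, smul_eq_mul, mul_sum]
  exact sum_congr rfl fun _ _ => by ring

theorem normSqSecondDiff_smul (t : ℝ) :
    normSqSecondDiff ε n (t • u) = t ^ 2 * normSqSecondDiff ε n u := by
  simp only [normSqSecondDiff, Pi.smul_apply, smul_eq_mul, mul_sum]
  exact sum_congr rfl fun _ _ => by ring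

theorem Admissible.normSqDiff_pos (hu : Admissible n u) (hne : u ≠ 0) (hε : 0 < ε) :
    0 < normSqDiff ε n u := by
  rw [normSqDiff_eq hε.ne']; exact div_pos (hu.sumSqDiff_pos hne) hε

theorem Admissible.normSqSecondDiff_pos (hu : Admissible n u) (hn : 0 ≤ n) (hne : u ≠ 0)
    (hε : 0 < ε) : 0 < normSqSecondDiff ε n u := by
  rw [normSqSecondDiff_eq hε.ne']; exact div_pos (hu.sumSqSecondDiff_pos hn hne) (pow_pos hε 3)

theorem Admissible.energy_eq (hu : Admissible n u) (hn : 0 ≤ n) (hε : ε ≠ 0) (φF φ2F : ℝ) :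
    energy ε φF φ2F n u
      = (φF + 4 * φ2F) * normSqDiff ε n u - ε ^ 2 * φ2F * normSqSecondDiff ε n u := by
  have hwindow : ∀ f : ℤ → ℝ,
      ∑ j ∈ Icc (-n + 1) (n - 1), f j * u j = ∑ j ∈ Icc (-n) n, f j * u j := fun f =>
    sum_subset (Icc_subset_Icc (by omega) (by omega)) fun j hj hj' => by
      simp only [mem_Icc] at hj hj'
      rw [hu.apply_eq_zero (by omega), mul_zero]
  have hsplit : energy ε φF φ2F n u = (φF * ∑ j ∈ Icc (-n) n, -secondDiff u j * u j
      + φ2F * ∑ j ∈ Icc (-n) n, -(u (j + 2) - 2 * u j + u (j - 2)) * u j) / ε := by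
    rw [← hwindow, ← hwindow, mul_sum, mul_sum, ← sum_add_distrib, sum_div, energy, mul_sum]
    refine sum_congr rfl fun j _ => ?_
    rw [secondDiff]; field_simp; ring
  rw [hsplit, hu.sum_neg_secondDiff_mul_self hn, hu.sum_neg_secondDiff_step_two_mul_self hn,
    normSqDiff_eq hε, normSqSecondDiff_eq hε]
  field_simp
  ring

end Scaling

theorem isLeast_energy {ε φF φ2F ν : ℝ} {n : ℤ} (hn : 0 ≤ n) (hε : 0 < ε) (hφ : φ2F ≤ 0)
    (hν : IsLeast {r | ∃ u, Admissible n u ∧ u ≠ 0 ∧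
      r = normSqSecondDiff ε n u / normSqDiff ε n u} ν) :
    IsLeast {q | ∃ u, Admissible n u ∧ normSqDiff ε n u = 1 ∧ q = energy ε φF φ2F n u}
      ((φF + 4 * φ2F) - ε ^ 2 * ν * φ2F) := by
  constructor
  · obtain ⟨u₀, hu₀, hne, rfl⟩ := hν.1
    have hD₀ := hu₀.normSqDiff_pos hne hε
    have ht : Real.sqrt (normSqDiff ε n u₀)⁻¹ ^ 2 = (normSqDiff ε n u₀)⁻¹ :=
      Real.sq_sqrt (inv_nonneg.2 hD₀.le)
    refine ⟨Real.sqrt (normSqDiff ε n u₀)⁻¹ • u₀, hu₀.smul _, ?_, ?_⟩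
    · rw [normSqDiff_smul, ht, inv_mul_cancel₀ hD₀.ne']
    · rw [(hu₀.smul _).energy_eq hn hε.ne', normSqDiff_smul, normSqSecondDiff_smul, ht,
        inv_mul_cancel₀ hD₀.ne']
      ring
  · rintro q ⟨u, hu, hD, rfl⟩
    have hne : u ≠ 0 := by
      rintro rfl
      simp [normSqDiff] at hD
    have hνle : ν ≤ normSqSecondDiff ε n u := by
      simpa only [hD, div_one] using hν.2 ⟨u, hu, hne, rfl⟩
    have hcoef : 0 ≤ -(ε ^ 2 * φ2F) :=
      neg_nonneg.2 (mul_nonpos_of_nonneg_of_nonpos (sq_nonneg ε) hφ)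
    rw [hu.energy_eq hn hε.ne', hD]
    nlinarith [mul_le_mul_of_nonneg_left hνle hcoef]

noncomputable def bump (n : ℤ) (j : ℤ) : ℝ :=
  if |j| ≤ n then ((n : ℝ) ^ 2 - (j : ℝ) ^ 2) ^ 2 else 0

section Bump

variable {n : ℤ}

theorem bump_of_abs_le {j : ℤ} (hj : |j| ≤ n) : bump n j = ((n : ℝ) ^ 2 - (j : ℝ) ^ 2) ^ 2 :=
  if_pos hj

theorem admissible_bump (n : ℤ) : Admissible n (bump n) := fun j hj => by
  rw [bump]
  split_ifs with h
  · have hsq : (j : ℝ) ^ 2 = (n : ℝ) ^ 2 := by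
      rw [← sq_abs, ← Int.cast_abs, le_antisymm h hj]
    rw [hsq, sub_self, zero_pow two_ne_zero]
  · rfl

theorem bump_zero (hn : 0 ≤ n) : bump n 0 = (n : ℝ) ^ 4 := by
  rw [bump_of_abs_le (by simpa using hn)]; push_cast; ring

theorem bump_ne_zero (hn : 1 ≤ n) : bump n ≠ 0 := fun h => by
  have h0 := congrFun h 0
  rw [bump_zero (by omega), Pi.zero_apply] at h0
  have : (0 : ℝ) < n := by exact_mod_cast (by omega : (0 : ℤ) < n)
  exact (pow_pos this 4).ne' h0

theorem sq_secondDiff_bump_le (hn : 1 ≤ n) {ℓ : ℤ} (hℓ : ℓ ∈ Icc (-n) n) :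
    secondDiff (bump n) ℓ ^ 2 ≤ 64 * (n : ℝ) ^ 4 := by
  rw [mem_Icc] at hℓ
  have hn' : (1 : ℝ) ≤ n := by exact_mod_cast hn
  have hb := admissible_bump n
  suffices h : -(8 * (n : ℝ) ^ 2) ≤ secondDiff (bump n) ℓ ∧
      secondDiff (bump n) ℓ ≤ 8 * (n : ℝ) ^ 2 by
    calc _ ≤ (8 * (n : ℝ) ^ 2) ^ 2 := sq_le_sq' h.1 h.2
      _ = _ := by ring
  rcases (show ℓ = -n ∨ ℓ = n ∨ (-n < ℓ ∧ ℓ < n) by omega) with h | h | ⟨h₁, h₂⟩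
  · subst ℓ
    rw [secondDiff, hb.apply_eq_zero (j := -n) (by omega),
      hb.apply_eq_zero (j := -n - 1) (by omega), bump_of_abs_le (abs_le.2 ⟨by omega, by omega⟩)]
    push_cast
    constructor <;> nlinarith
  · subst ℓ
    rw [secondDiff, hb.apply_eq_zero (j := n + 1) (by omega),
      hb.apply_eq_zero (j := n) (by omega), bump_of_abs_le (abs_le.2 ⟨by omega, by omega⟩)]
    push_cast
    constructor <;> nlinarith
  · rw [secondDiff, bump_of_abs_le (abs_le.2 ⟨by omega, by omega⟩),
      bump_of_abs_le (abs_le.2 ⟨by omega, by omega⟩),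
      bump_of_abs_le (abs_le.2 ⟨by omega, by omega⟩)]
    have hℓ₁ : (ℓ : ℝ) ≤ n - 1 := by exact_mod_cast (by omega : ℓ ≤ n - 1)
    have hℓ₂ : -(n : ℝ) + 1 ≤ ℓ := by exact_mod_cast (by omega : -n + 1 ≤ ℓ)
    push_cast
    constructor <;> nlinarith

theorem sumSqSecondDiff_bump_le (hn : 1 ≤ n) :
    sumSqSecondDiff n (bump n) ≤ (2 * n + 1) * (64 * (n : ℝ) ^ 4) := by
  have hcard : (#(Icc (-n) n) : ℝ) = 2 * n + 1 := by
    rw [Int.card_Icc, ← Int.cast_natCast, Int.toNat_of_nonneg (by omega)]; push_cast; ring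
  rw [← hcard, ← nsmul_eq_mul]
  exact sum_le_card_nsmul _ _ _ fun ℓ hℓ => sq_secondDiff_bump_le hn hℓ

theorem pow_eight_le_mul_sumSqDiff_bump (hn : 0 ≤ n) :
    (n : ℝ) ^ 8 ≤ n * sumSqDiff n (bump n) := by
  have hcs := sq_sub_le_mul_sum_sq_sub (bump n) (a := -n + 1) (b := 0) (by omega)
  rw [bump_zero hn, show -n + 1 - 1 = -n by ring,
    (admissible_bump n).apply_eq_zero (by omega)] at hcs
  have hhalf : ∑ j ∈ Icc (-n + 1) 0, (bump n j - bump n (j - 1)) ^ 2 ≤ sumSqDiff n (bump n) :=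
    sum_le_sum_of_subset_of_nonneg (Icc_subset_Icc le_rfl hn) fun _ _ _ => sq_nonneg _
  have hn' : (0 : ℝ) ≤ n := by exact_mod_cast hn
  push_cast at hcs
  nlinarith [mul_le_mul_of_nonneg_left hhalf hn']

theorem normSqSecondDiff_div_normSqDiff_bump_le (hn : 1 ≤ n) :
    normSqSecondDiff (1 / n) n (bump n) / normSqDiff (1 / n) n (bump n) ≤ 192 := by
  have hn' : (1 : ℝ) ≤ n := by exact_mod_cast hn
  have hε : (1 / n : ℝ) ≠ 0 := by positivity
  have hD := pow_eight_le_mul_sumSqDiff_bump (n := n) (by omega)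
  have hQ := sumSqSecondDiff_bump_le hn
  have hDpos : 0 < sumSqDiff n (bump n) := (admissible_bump n).sumSqDiff_pos (bump_ne_zero hn)
  rw [normSqSecondDiff_eq hε, normSqDiff_eq hε, div_le_iff₀ (div_pos hDpos (by positivity))]
  field_simp
  refine le_of_mul_le_mul_left ?_ (by positivity : (0 : ℝ) < n)
  calc (n : ℝ) * (sumSqSecondDiff n (bump n) * n ^ 2)
      = (n : ℝ) ^ 3 * sumSqSecondDiff n (bump n) := by ring
    _ ≤ (n : ℝ) ^ 3 * ((2 * n + 1) * (64 * n ^ 4)) := by gcongr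
    _ ≤ 192 * (n : ℝ) ^ 8 := by nlinarith [pow_pos (by positivity : (0 : ℝ) < n) 7]
    _ ≤ n * (192 * sumSqDiff n (bump n)) := by nlinarith

end Bump

end AtomisticChain

open AtomisticChain

theorem atomistic_stability_nu :
    ∃ C : ℝ, 0 < C ∧
      ∀ (N : ℕ), 2 ≤ N → ∀ (ε φF φ2F : ℝ), ε = 1 / N → φ2F ≤ 0 →
        ∀ νε : ℝ,
          IsLeast {r : ℝ | ∃ u : ℤ → ℝ,
              (∀ j : ℤ, (N : ℤ) ≤ |j| → u j = 0) ∧ u ≠ 0 ∧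
              r = (ε * ∑ ℓ ∈ Finset.Icc (-(N : ℤ)) (N : ℤ),
                      ((u (ℓ + 1) - 2 * u ℓ + u (ℓ - 1)) / ε ^ 2) ^ 2)
                  / (ε * ∑ ℓ ∈ Finset.Icc (-(N : ℤ) + 1) (N : ℤ),
                      ((u ℓ - u (ℓ - 1)) / ε) ^ 2)} νε →
          (0 < νε ∧ νε ≤ C ∧
            IsGLB {q : ℝ | ∃ u : ℤ → ℝ,
                (∀ j : ℤ, (N : ℤ) ≤ |j| → u j = 0) ∧
                ε * ∑ ℓ ∈ Finset.Icc (-(N : ℤ) + 1) (N : ℤ),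
                    ((u ℓ - u (ℓ - 1)) / ε) ^ 2 = 1 ∧
                q = ε * ∑ j ∈ Finset.Icc (-(N : ℤ) + 1) ((N : ℤ) - 1),
                    (φF * ((-u (j + 1) + 2 * u j - u (j - 1)) / ε ^ 2)
                      + φ2F * ((-u (j + 2) + 2 * u j - u (j - 2)) / ε ^ 2)) * u j}
              ((φF + 4 * φ2F) - ε ^ 2 * νε * φ2F)) := by
  refine ⟨192, by norm_num, fun N hN ε φF φ2F hε hφ νε hν => ?_⟩
  have hn : (1 : ℤ) ≤ N := by exact_mod_cast (by omega : 1 ≤ N)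
  replace hε : ε = 1 / ((N : ℤ) : ℝ) := by rw [hε, Int.cast_natCast]
  subst hε
  have hεpos : (0 : ℝ) < 1 / ((N : ℤ) : ℝ) := by positivity
  have hνpos : 0 < νε := by
    obtain ⟨u, hu, hne, rfl⟩ := hν.1
    exact div_pos (Admissible.normSqSecondDiff_pos hu (by omega) hne hεpos)
      (Admissible.normSqDiff_pos hu hne hεpos)
  refine ⟨hνpos, ?_, (isLeast_energy (by omega) hεpos hφ hν).isGLB⟩
  exact (hν.2 ⟨bump N, admissible_bump N, bump_ne_zero hn, rfl⟩).trans
    (normSqSecondDiff_div_normSqDiff_bump_le hn)
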